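/- arXiv:1807.03496 — 6 statements merged into one kernel-verified Lean document; each statement's English description precedes it below -/
import Mathlib

section
/- Let d ∈ {2,3}, let x_1,…,x_N be pairwise distinct points in ℝ^d with particle volumes V_1,…,V_N > 0, let w be a reference weight function with support radius r₀, h > 0, and let Δt, ν > 0. Partition the index set {1,…,N} into Λ_fl ∪ Λ_sf ∪ Λ_wl and let M be the number of indices in Λ_fl ∪ Λ_sf, enumerated as 1,…,M. Define the M×M real matrix A by A_ii = 1 + Δt·ν·Σ_{l=1}^N V_l C_il and A_ij = −Δt·ν·V_j C_ij for i ≠ j, where C_ij := −2 ẇ_h(|x_i − x_j|)/|x_i − x_j| for i ≠ j and C_ii := 0. Then A is strictly diagonally dominant (|A_ii| − Σ_{j≠i}|A_ij| ≥ 1 for every i ≤ M) and hence invertible; consequently the implicit prediction step has a unique solution. -/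
open MeasureTheory Finset
open scoped BigOperators RealInnerProductSpace

noncomputable section

namespace ISPH

/-- Points of `ℝ^d`. -/
abbrev Pt (d : ℕ) := EuclideanSpace ℝ (Fin d)

/-- A reference weight function for dimension `d` with support radius `r₀`. -/
structure IsRefWeight (d : ℕ) (w : ℝ → ℝ) (r₀ : ℝ) : Prop where
  r0_pos : 0 < r₀
  smooth : ContDiffOn ℝ 2 w (Set.Ici 0)
  pos : ∀ r : ℝ, 0 < r → r < r₀ → 0 < w r
  eq_zero : ∀ r : ℝ, r₀ ≤ r → w r = 0
  deriv_neg : ∀ r : ℝ, 0 < r → r < r₀ → deriv w r < 0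
  deriv_zero : deriv w 0 = 0
  deriv_eq_zero : ∀ r : ℝ, r₀ ≤ r → deriv w r = 0
  unity : (∫ y : Pt d, w ‖y‖) = 1

/-- The scaled weight function `w_h`. -/
def wh (d : ℕ) (h : ℝ) (w : ℝ → ℝ) : ℝ → ℝ := fun r => (h ^ d)⁻¹ * w (r / h)

/-- `ẇ_h`, the derivative of the scaled weight function. -/
def dwh (d : ℕ) (h : ℝ) (w : ℝ → ℝ) : ℝ → ℝ := deriv (wh d h w)

variable {d N : ℕ}

/-- `∇w_h(|x i − x j|)`; equal to `0` when `i = j`. -/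
def gradW (x : Fin N → Pt d) (dw : ℝ → ℝ) (i j : Fin N) : Pt d :=
  (dw ‖x i - x j‖ / ‖x i - x j‖) • (x i - x j)

/-- `C i j = −2 ẇ_h(|x_i − x_j|)/|x_i − x_j|` off the diagonal, `0` on it. -/
def Cmat (x : Fin N → Pt d) (dw : ℝ → ℝ) (i j : Fin N) : ℝ :=
  if i = j then 0 else -2 * dw ‖x i - x j‖ / ‖x i - x j‖

/-- Discrete divergence over `Λ`. -/
def dDiv (x : Fin N → Pt d) (V : Fin N → ℝ) (dw : ℝ → ℝ) (Λ : Finset (Fin N))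
    (φ : Fin N → Pt d) (i : Fin N) : ℝ :=
  ∑ j ∈ Λ, V j * ⟪φ j + φ i, gradW x dw i j⟫

/-- Discrete gradient over `Λ`. -/
def dGrad (x : Fin N → Pt d) (V : Fin N → ℝ) (dw : ℝ → ℝ) (Λ : Finset (Fin N))
    (ψ : Fin N → ℝ) (i : Fin N) : Pt d :=
  ∑ j ∈ Λ, (V j * (ψ j - ψ i)) • gradW x dw i j

/-- Discrete Laplacian over `Λ` (for scalar- or vector-valued functions). -/
def dLap {F : Type*} [NormedAddCommGroup F] [NormedSpace ℝ F]
    (x : Fin N → Pt d) (V : Fin N → ℝ) (dw : ℝ → ℝ) (Λ : Finset (Fin N))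
    (φ : Fin N → F) (i : Fin N) : F :=
  (2 : ℝ) • ∑ j ∈ Λ.erase i,
    ((V j / ‖x i - x j‖) * ⟪‖x i - x j‖⁻¹ • (x i - x j), gradW x dw i j⟫) • (φ i - φ j)

/-- Discrete inner product over `Λ`. -/
def dInner {F : Type*} [NormedAddCommGroup F] [InnerProductSpace ℝ F]
    (V : Fin N → ℝ) (Λ : Finset (Fin N)) (φ ψ : Fin N → F) : ℝ :=
  ∑ i ∈ Λ, V i * ⟪φ i, ψ i⟫

/-- Square of the discrete `L²` norm over `Λ`. -/
def l2normSq {F : Type*} [NormedAddCommGroup F]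
    (V : Fin N → ℝ) (Λ : Finset (Fin N)) (φ : Fin N → F) : ℝ :=
  ∑ i ∈ Λ, V i * ‖φ i‖ ^ 2

/-- Discrete `L²` norm over `Λ`. -/
def l2norm {F : Type*} [NormedAddCommGroup F]
    (V : Fin N → ℝ) (Λ : Finset (Fin N)) (φ : Fin N → F) : ℝ :=
  Real.sqrt (l2normSq V Λ φ)

/-- Square of the discrete `H¹₀` seminorm over `Λ`. -/
def h1semiSq {F : Type*} [NormedAddCommGroup F]
    (x : Fin N → Pt d) (V : Fin N → ℝ) (dw : ℝ → ℝ) (Λ : Finset (Fin N))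
    (φ : Fin N → F) : ℝ :=
  ∑ i ∈ Λ, V i * ∑ j ∈ Λ.erase i,
    V j * (‖φ i - φ j‖ ^ 2 / ‖x i - x j‖) * |dw ‖x i - x j‖|

/-- Discrete `H¹₀` seminorm over `Λ`. -/
def h1semi {F : Type*} [NormedAddCommGroup F]
    (x : Fin N → Pt d) (V : Fin N → ℝ) (dw : ℝ → ℝ) (Λ : Finset (Fin N))
    (φ : Fin N → F) : ℝ :=
  Real.sqrt (h1semiSq x V dw Λ φ)

/-- Discrete `H₀⁻¹` seminorm over `Λ`. -/
def hm1semi {F : Type*} [NormedAddCommGroup F] [InnerProductSpace ℝ F]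
    (x : Fin N → Pt d) (V : Fin N → ℝ) (dw : ℝ → ℝ) (Λ : Finset (Fin N))
    (φ : Fin N → F) : ℝ :=
  sSup { r : ℝ | ∃ χ : Fin N → F, h1semi x V dw Λ χ ≠ 0 ∧
    r = dInner V Λ φ χ / h1semi x V dw Λ χ }

/-- There is a chain from `i` ending in `target`, with all indices before the last
one in `inter`, and consecutive distances strictly between `0` and `R`. -/
def Chain (x : Fin N → Pt d) (R : ℝ) (inter target : Finset (Fin N)) (i : Fin N) : Prop :=
  ∃ (ζ : ℕ) (c : ℕ → Fin N), c 0 = i ∧ (∀ l < ζ, c l ∈ inter) ∧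
    (∀ l < ζ, 0 < ‖x (c l) - x (c (l + 1))‖ ∧ ‖x (c l) - x (c (l + 1))‖ < R) ∧
    c ζ ∈ target

end ISPH

open ISPH

/-!
Since `ẇ_h ≤ 0` on `(0, ∞)`, every `C_ij` is nonnegative (at `|x_i - x_j| = 0` the division
gives `0`). Hence the off-diagonal entries of `A` are `≤ 0` and their absolute values in row `i`
add up to at most `Δt ν ∑_l V_l C_il`, which is exactly `A_ii - 1`. Strict diagonal dominance then
makes `A` invertible (Gershgorin / Lévy–Desplanques).
-/

namespace ISPH

theorem IsRefWeight.deriv_nonpos {d : ℕ} {w : ℝ → ℝ} {r₀ : ℝ} (hw : IsRefWeight d w r₀)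
    {r : ℝ} (hr : 0 < r) : deriv w r ≤ 0 := by
  rcases le_or_gt r₀ r with hr₀ | hr₀
  · exact (hw.deriv_eq_zero r hr₀).le
  · exact (hw.deriv_neg r hr hr₀).le

-- No differentiability is needed: where `w` is not differentiable, both sides are `0`.
theorem dwh_apply (d : ℕ) (h : ℝ) (w : ℝ → ℝ) (r : ℝ) :
    dwh d h w r = (h ^ d)⁻¹ * (h⁻¹ * deriv w (r / h)) := by
  have hcomp : (fun s => w (s / h)) = fun s => w (h⁻¹ * s) := by
    funext s; rw [div_eq_inv_mul]
  unfold dwh wh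
  rw [deriv_const_mul_field', hcomp]
  dsimp only
  rw [deriv_comp_mul_left, smul_eq_mul, div_eq_inv_mul]

theorem dwh_nonpos {d : ℕ} {w : ℝ → ℝ} {r₀ h : ℝ} (hw : IsRefWeight d w r₀) (hh : 0 < h)
    {r : ℝ} (hr : 0 < r) : dwh d h w r ≤ 0 := by
  rw [dwh_apply]
  exact mul_nonpos_of_nonneg_of_nonpos (by positivity)
    (mul_nonpos_of_nonneg_of_nonpos (by positivity) (hw.deriv_nonpos (div_pos hr hh)))

theorem Cmat_nonneg {x : Fin N → Pt d} {dw : ℝ → ℝ} (hdw : ∀ r, 0 < r → dw r ≤ 0)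
    (i j : Fin N) : 0 ≤ Cmat x dw i j := by
  unfold Cmat
  split_ifs
  · exact le_rfl
  · rcases (norm_nonneg (x i - x j)).eq_or_lt with hr | hr
    · rw [← hr, div_zero]
    · exact div_nonneg (by linarith [hdw _ hr]) hr.le

end ISPH

theorem Finset.sum_erase_subtype_le_sum {α : Type*} [Fintype α] [DecidableEq α] {s : Finset α}
    {f : α → ℝ} (hf : ∀ a, 0 ≤ f a) (i : s) :
    ∑ j ∈ univ.erase i, f j ≤ ∑ a, f a :=
  calc ∑ j ∈ univ.erase i, f j ≤ ∑ j : s, f j := sum_le_univ_sum_of_nonneg fun _ => hf _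
    _ = ∑ a ∈ s, f a := sum_coe_sort s f
    _ ≤ ∑ a, f a := sum_le_univ_sum_of_nonneg hf

namespace Matrix

variable {ι : Type*} [Fintype ι] [DecidableEq ι]

theorem one_le_abs_diag_sub_sum_abs_offDiag {A : Matrix ι ι ℝ} {c : ι → ι → ℝ} {S : ι → ℝ}
    (hA : ∀ i j, A i j = if i = j then 1 + S i else -c i j) (hc : ∀ i j, 0 ≤ c i j)
    (hS : ∀ i, ∑ j ∈ univ.erase i, c i j ≤ S i) (i : ι) :
    1 ≤ |A i i| - ∑ j ∈ univ.erase i, |A i j| := by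
  have hS_nonneg : 0 ≤ S i := (sum_nonneg fun j _ => hc i j).trans (hS i)
  have hdiag : |A i i| = 1 + S i := by
    rw [hA, if_pos rfl, abs_of_nonneg (by linarith)]
  have hoff : ∑ j ∈ univ.erase i, |A i j| = ∑ j ∈ univ.erase i, c i j :=
    sum_congr rfl fun j hj => by
      rw [hA, if_neg (ne_of_mem_erase hj).symm, abs_neg, abs_of_nonneg (hc i j)]
  linarith [hS i]

theorem existsUnique_mulVec_eq {K : Type*} [Field K] {A : Matrix ι ι K} (hA : IsUnit A.det)
    (b : ι → K) : ∃! v, A *ᵥ v = b :=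
  have hA' : IsUnit A := (isUnit_iff_isUnit_det A).mpr hA
  Function.Bijective.existsUnique
    ⟨mulVec_injective_iff_isUnit.mpr hA', mulVec_surjective_iff_isUnit.mpr hA'⟩ b

end Matrix

theorem statement0_general (d N : ℕ)
    (x : Fin N → Pt d)
    (V : Fin N → ℝ) (hV : ∀ i, 0 < V i)
    (w : ℝ → ℝ) (r₀ : ℝ) (hw : IsRefWeight d w r₀)
    (h : ℝ) (hh : 0 < h) (Δt ν : ℝ) (hΔt : 0 < Δt) (hν : 0 < ν)
    (Λfl Λsf : Finset (Fin N))
    (A : Matrix {i // i ∈ Λfl ∪ Λsf} {i // i ∈ Λfl ∪ Λsf} ℝ)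
    (hA : ∀ i j, A i j =
      if i = j then 1 + Δt * ν * ∑ l : Fin N, V l * Cmat x (dwh d h w) i.1 l
      else -(Δt * ν * V j.1 * Cmat x (dwh d h w) i.1 j.1)) :
    (∀ i, 1 ≤ |A i i| - ∑ j ∈ Finset.univ.erase i, |A i j|) ∧
    IsUnit A.det ∧
    ∀ b : {i // i ∈ Λfl ∪ Λsf} → ℝ, ∃! v, A.mulVec v = b := by
  have hC := Cmat_nonneg (x := x) fun _ => dwh_nonpos hw hh
  have hΔtν : 0 ≤ Δt * ν := by positivity
  have hVC : ∀ i l, 0 ≤ V l * Cmat x (dwh d h w) i l := fun i l => mul_nonneg (hV l).le (hC i l)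
  have hdom : ∀ i, 1 ≤ |A i i| - ∑ j ∈ Finset.univ.erase i, |A i j| :=
    Matrix.one_le_abs_diag_sub_sum_abs_offDiag hA
      (fun i j => by rw [mul_assoc]; exact mul_nonneg hΔtν (hVC i.1 j.1))
      fun i => by
        have := mul_le_mul_of_nonneg_left (Finset.sum_erase_subtype_le_sum (hVC i.1) i) hΔtν
        simpa only [Finset.mul_sum, mul_assoc] using this
  have hdet : IsUnit A.det := isUnit_iff_ne_zero.mpr <|
    det_ne_zero_of_sum_row_lt_diag fun i => by
      simp only [Real.norm_eq_abs]
      linarith [hdom i]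
  exact ⟨hdom, hdet, Matrix.existsUnique_mulVec_eq hdet⟩

/-- strict diagonal dominance and unique solvability of the coefficient
matrix of the implicit viscous prediction step of the ISPH method. -/
theorem statement0 (d N : ℕ) (hd : d = 2 ∨ d = 3)
    (x : Fin N → Pt d) (hx : Function.Injective x)
    (V : Fin N → ℝ) (hV : ∀ i, 0 < V i)
    (w : ℝ → ℝ) (r₀ : ℝ) (hw : IsRefWeight d w r₀)
    (h : ℝ) (hh : 0 < h) (Δt ν : ℝ) (hΔt : 0 < Δt) (hν : 0 < ν)
    (Λfl Λsf Λwl : Finset (Fin N))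
    (hd1 : Disjoint Λfl Λsf) (hd2 : Disjoint Λfl Λwl) (hd3 : Disjoint Λsf Λwl)
    (hcover : Λfl ∪ Λsf ∪ Λwl = Finset.univ)
    (A : Matrix {i // i ∈ Λfl ∪ Λsf} {i // i ∈ Λfl ∪ Λsf} ℝ)
    (hA : ∀ i j, A i j =
      if i = j then 1 + Δt * ν * ∑ l : Fin N, V l * Cmat x (dwh d h w) i.1 l
      else -(Δt * ν * V j.1 * Cmat x (dwh d h w) i.1 j.1)) :
    (∀ i, 1 ≤ |A i i| - ∑ j ∈ Finset.univ.erase i, |A i j|) ∧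
    IsUnit A.det ∧
    ∀ b : {i // i ∈ Λfl ∪ Λsf} → ℝ, ∃! v, A.mulVec v = b :=
  statement0_general d N x V hV w r₀ hw h hh Δt ν hΔt hν Λfl Λsf A hA
end
end

section
/- Let d ∈ {2,3}, let x_1,…,x_N be pairwise distinct points in ℝ^d with particle volumes V_1,…,V_N > 0, let w be a reference weight function with support radius r₀, and h > 0. Let the index set {1,…,N} be partitioned into Λ_fl, Λ_sf, Λ_wl and assume the wall connectivity condition: for every i ∈ Λ_fl ∪ Λ_sf there is a finite sequence i = i_1, …, i_ζ with i_ζ ∈ Λ_wl and 0 < |x_{i_l} − x_{i_{l+1}}| < r₀ h for 1 ≤ l < ζ. Let φ : {1,…,N} → ℝ^d satisfy φ_i = 0 for all i ∈ Λ_wl. If the discrete H¹₀ seminorm of φ over {1,…,N} is zero, i.e. Σ_{i=1}^N V_i Σ_{j≠i} V_j (|φ_i − φ_j|²/|x_i − x_j|) |ẇ_h(|x_i − x_j|)| = 0, then φ_i = 0 for every i. -/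
open MeasureTheory Finset
open scoped BigOperators RealInnerProductSpace

noncomputable section

open ISPH

/-!
A vanishing sum of nonnegative terms has vanishing terms. Since `ẇ_h < 0` on `(0, r₀ h)`, the
term of a pair of particles at distance less than `r₀ h` vanishes only if `φ` takes the same value
at both, so `φ` is constant along every chain. Each fluid or free-surface particle is joined by a
chain to a wall particle, where `φ = 0`.
-/

namespace ISPH

theorem hasDerivAt_wh {d : ℕ} {h : ℝ} {w : ℝ → ℝ} {w' r : ℝ} (hw : HasDerivAt w w' (r / h)) :
    HasDerivAt (wh d h w) ((h ^ d)⁻¹ * (w' / h)) r := by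
  have hdiv : HasDerivAt (fun s : ℝ => s / h) (1 / h) r := (hasDerivAt_id' r).div_const h
  unfold wh
  simpa only [Function.comp_def, mul_one_div] using (hw.comp r hdiv).const_mul (h ^ d)⁻¹

theorem IsRefWeight.dwh_neg {d : ℕ} {w : ℝ → ℝ} {r₀ h r : ℝ} (hw : IsRefWeight d w r₀)
    (hh : 0 < h) (hr : 0 < r) (hrR : r < r₀ * h) : dwh d h w r < 0 := by
  have hrh : 0 < r / h := div_pos hr hh
  have hmem : Set.Ici (0 : ℝ) ∈ nhds (r / h) := Ici_mem_nhds hrh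
  have hdiff : DifferentiableAt ℝ w (r / h) :=
    (hw.smooth.contDiffAt hmem).differentiableAt two_ne_zero
  rw [dwh, (hasDerivAt_wh hdiff.hasDerivAt).deriv]
  have hneg : deriv w (r / h) < 0 := hw.deriv_neg _ hrh ((div_lt_iff₀ hh).mpr hrR)
  exact mul_neg_of_pos_of_neg (by positivity) (div_neg_of_neg_of_pos hneg hh)

theorem eq_of_h1semiSq_eq_zero {d N : ℕ} {F : Type*} [NormedAddCommGroup F]
    {x : Fin N → Pt d} {V : Fin N → ℝ} {dw : ℝ → ℝ} {Λ : Finset (Fin N)} {φ : Fin N → F}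
    (hV : ∀ i ∈ Λ, 0 < V i) (hzero : h1semiSq x V dw Λ φ = 0) {i j : Fin N}
    (hi : i ∈ Λ) (hj : j ∈ Λ) (hij : 0 < ‖x i - x j‖) (hdw : dw ‖x i - x j‖ ≠ 0) :
    φ i = φ j := by
  have hne : j ≠ i := fun e => by simp [e] at hij
  have hterm_nonneg : ∀ i ∈ Λ, ∀ j ∈ Λ.erase i,
      0 ≤ V j * (‖φ i - φ j‖ ^ 2 / ‖x i - x j‖) * |dw ‖x i - x j‖| := fun i _ j hj =>
    have := (hV j (mem_of_mem_erase hj)).le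
    by positivity
  have hrow : ∑ j ∈ Λ.erase i, V j * (‖φ i - φ j‖ ^ 2 / ‖x i - x j‖) * |dw ‖x i - x j‖| = 0 := by
    have hrow_nonneg : ∀ i ∈ Λ, 0 ≤ V i * ∑ j ∈ Λ.erase i,
        V j * (‖φ i - φ j‖ ^ 2 / ‖x i - x j‖) * |dw ‖x i - x j‖| := fun i hi =>
      mul_nonneg (hV i hi).le (sum_nonneg (hterm_nonneg i hi))
    have := (sum_eq_zero_iff_of_nonneg hrow_nonneg).mp hzero i hi
    exact (mul_eq_zero.mp this).resolve_left (hV i hi).ne'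
  have hterm := (sum_eq_zero_iff_of_nonneg (hterm_nonneg i hi)).mp hrow j (mem_erase.mpr ⟨hne, hj⟩)
  have hsq : ‖φ i - φ j‖ ^ 2 = 0 := by
    simpa [(hV j hj).ne', hij.ne', hdw] using hterm
  simpa [sub_eq_zero] using hsq

theorem Chain.exists_eq_of_near {d N : ℕ} {α : Type*} {x : Fin N → Pt d} {R : ℝ}
    {inter target : Finset (Fin N)} {i : Fin N} (hc : Chain x R inter target i) {f : Fin N → α}
    (hf : ∀ i j, 0 < ‖x i - x j‖ → ‖x i - x j‖ < R → f i = f j) : ∃ k ∈ target, f i = f k := by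
  obtain ⟨ζ, c, rfl, -, hstep, hζ⟩ := hc
  have hprefix : ∀ m ≤ ζ, f (c 0) = f (c m) := by
    intro m hm
    induction m with
    | zero => rfl
    | succ m ih => exact (ih (by omega)).trans (hf _ _ (hstep m hm).1 (hstep m hm).2)
  exact ⟨c ζ, hζ, hprefix ζ le_rfl⟩

end ISPH

theorem statement3_general (d N : ℕ)
    (x : Fin N → Pt d)
    (V : Fin N → ℝ) (hV : ∀ i, 0 < V i)
    (w : ℝ → ℝ) (r₀ : ℝ) (hw : IsRefWeight d w r₀)
    (h : ℝ) (hh : 0 < h)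
    (Λfl Λsf Λwl : Finset (Fin N))
    (hcover : Λfl ∪ Λsf ∪ Λwl = Finset.univ)
    (hconn : ∀ i ∈ Λfl ∪ Λsf, Chain x (r₀ * h) Finset.univ Λwl i)
    (φ : Fin N → Pt d) (hφw : ∀ i ∈ Λwl, φ i = 0)
    (hzero : h1semiSq x V (dwh d h w) Finset.univ φ = 0) :
    ∀ i, φ i = 0 := by
  have hnear : ∀ i j, 0 < ‖x i - x j‖ → ‖x i - x j‖ < r₀ * h → φ i = φ j := fun i j hij hR =>
    eq_of_h1semiSq_eq_zero (fun i _ => hV i) hzero (mem_univ i) (mem_univ j) hij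
      (hw.dwh_neg hh hij hR).ne
  intro i
  rcases mem_union.mp (hcover ▸ mem_univ i) with hi | hi
  · obtain ⟨k, hk, hik⟩ := (hconn i hi).exists_eq_of_near hnear
    rw [hik, hφw k hk]
  · exact hφw i hi

/-- under the wall connectivity condition, a function vanishing on the
wall particles with zero discrete `H¹₀` seminorm vanishes identically. -/
theorem statement3 (d N : ℕ) (hd : d = 2 ∨ d = 3)
    (x : Fin N → Pt d) (hx : Function.Injective x)
    (V : Fin N → ℝ) (hV : ∀ i, 0 < V i)
    (w : ℝ → ℝ) (r₀ : ℝ) (hw : IsRefWeight d w r₀)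
    (h : ℝ) (hh : 0 < h)
    (Λfl Λsf Λwl : Finset (Fin N))
    (hd1 : Disjoint Λfl Λsf) (hd2 : Disjoint Λfl Λwl) (hd3 : Disjoint Λsf Λwl)
    (hcover : Λfl ∪ Λsf ∪ Λwl = Finset.univ)
    (hconn : ∀ i ∈ Λfl ∪ Λsf, Chain x (r₀ * h) Finset.univ Λwl i)
    (φ : Fin N → Pt d) (hφw : ∀ i ∈ Λwl, φ i = 0)
    (hzero : h1semiSq x V (dwh d h w) Finset.univ φ = 0) :
    ∀ i, φ i = 0 :=
  statement3_general d N x V hV w r₀ hw h hh Λfl Λsf Λwl hcover hconn φ hφw hzero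
end
end

section
/- Let d ∈ {2,3}, let x_1,…,x_N be pairwise distinct points in ℝ^d with particle volumes V_1,…,V_N > 0, let w be a reference weight function, h > 0, Δt > 0, and c₀ > 0. Assume the semi-regularity condition: max_{i=1,…,N} Σ_{j=1}^N V_j |x_i − x_j| |ẇ_h(|x_i − x_j|)| ≤ d + c₀ Δt. Then for every Λ ⊆ {1,…,N} and every ψ : Λ → ℝ, the discrete gradient (∇ψ)_i := Σ_{j∈Λ} V_j (ψ_j − ψ_i) ∇w_h(|x_i − x_j|) satisfies ‖∇ψ‖_{2,Λ}² ≤ (d + c₀ Δt) |ψ|_{1,Λ}². -/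
open MeasureTheory Finset
open scoped BigOperators RealInnerProductSpace

noncomputable section

namespace ISPH

variable {d N : ℕ}

/-!
Pointwise, `|(∇ψ)_i| ≤ ∑_j V_j |ψ_j - ψ_i| |ẇ_h(r_ij)|`. Splitting each summand as
`√(V_j r_ij |ẇ_h|) · √(V_j (ψ_i - ψ_j)² |ẇ_h| / r_ij)` and applying Cauchy–Schwarz bounds
`|(∇ψ)_i|²` by `∑_j V_j r_ij |ẇ_h(r_ij)|`, which is at most `d + c₀ Δt` by semi-regularity, times
the `i`-th row of `|ψ|²_{1,Λ}`. Multiplying by `V_i` and summing over `i ∈ Λ` gives the claim.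
-/

/-- The factor `k / r * r` (rather than `k`) keeps the bound true where `r = 0`, since `k / 0 = 0`. -/
theorem sq_sum_le_mul_sum_div {ι : Type*} (s : Finset ι) (V r k a : ι → ℝ)
    (hV : ∀ j ∈ s, 0 ≤ V j) (hr : ∀ j ∈ s, 0 ≤ r j) (hk : ∀ j ∈ s, 0 ≤ k j) :
    (∑ j ∈ s, V j * |a j| * (k j / r j * r j)) ^ 2 ≤
      (∑ j ∈ s, V j * r j * k j) * ∑ j ∈ s, V j * (a j ^ 2 / r j) * k j := by
  refine sum_sq_le_sum_mul_sum_of_sq_le_mul s (fun j hj => ?_) (fun j hj => ?_) fun j hj => ?_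
  · exact mul_nonneg (mul_nonneg (hV j hj) (hr j hj)) (hk j hj)
  · exact mul_nonneg (mul_nonneg (hV j hj) (div_nonneg (sq_nonneg _) (hr j hj))) (hk j hj)
  refine le_of_eq ?_
  rcases (hr j hj).eq_or_lt with hr0 | hrpos
  · simp [← hr0]
  · rw [mul_pow, mul_pow, sq_abs, div_mul_cancel₀ _ hrpos.ne']
    field_simp

variable (x : Fin N → Pt d) (V : Fin N → ℝ) (dw : ℝ → ℝ)

theorem norm_gradW (i j : Fin N) :
    ‖gradW x dw i j‖ = |dw ‖x i - x j‖| / ‖x i - x j‖ * ‖x i - x j‖ := by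
  rw [gradW, norm_smul, Real.norm_eq_abs, abs_div, abs_norm]

theorem dGrad_eq_sum_erase (Λ : Finset (Fin N)) (ψ : Fin N → ℝ) (i : Fin N) :
    dGrad x V dw Λ ψ i = ∑ j ∈ Λ.erase i, (V j * (ψ j - ψ i)) • gradW x dw i j :=
  (sum_erase _ (by simp)).symm

theorem norm_dGrad_sq_le (hV : ∀ j, 0 ≤ V j) (Λ : Finset (Fin N)) (ψ : Fin N → ℝ)
    (i : Fin N) :
    ‖dGrad x V dw Λ ψ i‖ ^ 2 ≤
      (∑ j ∈ Λ.erase i, V j * ‖x i - x j‖ * |dw ‖x i - x j‖|) *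
        ∑ j ∈ Λ.erase i, V j * (‖ψ i - ψ j‖ ^ 2 / ‖x i - x j‖) * |dw ‖x i - x j‖| := by
  have triangle : ‖dGrad x V dw Λ ψ i‖ ≤ ∑ j ∈ Λ.erase i,
      V j * |ψ i - ψ j| * (|dw ‖x i - x j‖| / ‖x i - x j‖ * ‖x i - x j‖) := by
    rw [dGrad_eq_sum_erase]
    refine (norm_sum_le _ _).trans_eq (sum_congr rfl fun j _ => ?_)
    rw [norm_smul, norm_gradW, norm_mul, Real.norm_eq_abs, Real.norm_eq_abs, abs_of_nonneg (hV j),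
      abs_sub_comm]
  simp only [Real.norm_eq_abs, sq_abs]
  exact (pow_le_pow_left₀ (norm_nonneg _) triangle 2).trans <|
    sq_sum_le_mul_sum_div _ V _ _ _ (fun j _ => hV j) (fun j _ => norm_nonneg _)
      (fun j _ => abs_nonneg _)

theorem l2normSq_dGrad_le (hV : ∀ j, 0 ≤ V j) (Λ : Finset (Fin N)) (ψ : Fin N → ℝ) (A : ℝ)
    (hA : ∀ i ∈ Λ, ∑ j ∈ Λ.erase i, V j * ‖x i - x j‖ * |dw ‖x i - x j‖| ≤ A) :
    l2normSq V Λ (dGrad x V dw Λ ψ) ≤ A * h1semiSq x V dw Λ ψ := by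
  rw [l2normSq, h1semiSq, mul_sum]
  refine sum_le_sum fun i hi => ?_
  have hrow : 0 ≤ ∑ j ∈ Λ.erase i,
      V j * (‖ψ i - ψ j‖ ^ 2 / ‖x i - x j‖) * |dw ‖x i - x j‖| :=
    sum_nonneg fun j _ =>
      mul_nonneg (mul_nonneg (hV j) (div_nonneg (sq_nonneg _) (norm_nonneg _))) (abs_nonneg _)
  calc V i * ‖dGrad x V dw Λ ψ i‖ ^ 2
      ≤ V i * (A * ∑ j ∈ Λ.erase i,
          V j * (‖ψ i - ψ j‖ ^ 2 / ‖x i - x j‖) * |dw ‖x i - x j‖|) :=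
        mul_le_mul_of_nonneg_left ((norm_dGrad_sq_le x V dw hV Λ ψ i).trans
          (mul_le_mul_of_nonneg_right (hA i hi) hrow)) (hV i)
    _ = A * (V i * ∑ j ∈ Λ.erase i,
          V j * (‖ψ i - ψ j‖ ^ 2 / ‖x i - x j‖) * |dw ‖x i - x j‖|) := by ring

end ISPH

open ISPH

theorem statement7_general (d N : ℕ)
    (x : Fin N → Pt d)
    (V : Fin N → ℝ) (hV : ∀ i, 0 < V i)
    (w : ℝ → ℝ)
    (h : ℝ) (Δt c₀ : ℝ)
    (hreg : ∀ i, ∑ j : Fin N,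
      V j * ‖x i - x j‖ * |dwh d h w ‖x i - x j‖| ≤ (d : ℝ) + c₀ * Δt) :
    ∀ (Λ : Finset (Fin N)) (ψ : Fin N → ℝ),
      l2normSq V Λ (dGrad x V (dwh d h w) Λ ψ) ≤
        ((d : ℝ) + c₀ * Δt) * h1semiSq x V (dwh d h w) Λ ψ := by
  intro Λ ψ
  refine l2normSq_dGrad_le x V _ (fun j => (hV j).le) Λ ψ _ fun i _ => (hreg i).trans' ?_
  exact sum_le_sum_of_subset_of_nonneg (subset_univ _) fun j _ _ =>
    mul_nonneg (mul_nonneg (hV j).le (norm_nonneg _)) (abs_nonneg _)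

/-- under the semi-regularity condition, the discrete `L²` norm of the
discrete gradient is controlled by the discrete `H¹₀` seminorm. -/
theorem statement7 (d N : ℕ) (hd : d = 2 ∨ d = 3)
    (x : Fin N → Pt d) (hx : Function.Injective x)
    (V : Fin N → ℝ) (hV : ∀ i, 0 < V i)
    (w : ℝ → ℝ) (r₀ : ℝ) (hw : IsRefWeight d w r₀)
    (h : ℝ) (hh : 0 < h) (Δt c₀ : ℝ) (hΔt : 0 < Δt) (hc₀ : 0 < c₀)
    (hreg : ∀ i, ∑ j : Fin N,
      V j * ‖x i - x j‖ * |dwh d h w ‖x i - x j‖| ≤ (d : ℝ) + c₀ * Δt) :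
    ∀ (Λ : Finset (Fin N)) (ψ : Fin N → ℝ),
      l2normSq V Λ (dGrad x V (dwh d h w) Λ ψ) ≤
        ((d : ℝ) + c₀ * Δt) * h1semiSq x V (dwh d h w) Λ ψ :=
  statement7_general d N x V hV w h Δt c₀ hreg
end
end

section
/- Let d ∈ {2,3}, let x_1,…,x_N be pairwise distinct points in ℝ^d with particle volumes V_1,…,V_N > 0, let w be a reference weight function, h > 0, ν > 0, Δt > 0, and δ ∈ (0,1). Assume the time step condition: Δt ≤ (δ/(2ν)) · (max_{i=1,…,N} Σ_{j≠i} V_j |ẇ_h(|x_i − x_j|)| / |x_i − x_j|)^{−1}. Then for every Λ ⊆ {1,…,N} and every φ : Λ → ℝ^d, the discrete Laplacian (Δφ)_i := 2 Σ_{j∈Λ, j≠i} V_j ((φ_i − φ_j)/|x_i − x_j|) ((x_i − x_j)/|x_i − x_j|)·∇w_h(|x_i − x_j|) satisfies ‖Δφ‖_{2,Λ}² ≤ (2δ/(Δt ν)) |φ|_{1,Λ}². -/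
/-!
`(Δφ)_i` is a sum of the differences `φ_i - φ_j` with weights `a_j = V_j |ẇ_h(r_ij)| / r_ij`.
Cauchy–Schwarz gives `|(Δφ)_i|² ≤ 4 (∑_j a_j) (∑_j a_j |φ_i - φ_j|²)`; the time step condition
bounds `∑_j a_j` by `δ / (2νΔt)`, and summing the second factor against `V_i` gives `|φ|²_{1,Λ}`.
-/

open MeasureTheory Finset
open scoped BigOperators RealInnerProductSpace

noncomputable section

open ISPH

namespace ISPH

/-- Both sides vanish at `v = 0` (as `c / 0 = 0`), so coincident points need no separate case. -/
lemma div_norm_mul_inner_inv_norm_smul {E : Type*} [NormedAddCommGroup E] [InnerProductSpace ℝ E]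
    (c a : ℝ) (v : E) : c / ‖v‖ * ⟪‖v‖⁻¹ • v, (a / ‖v‖) • v⟫ = c * (a / ‖v‖) := by
  rcases eq_or_ne ‖v‖ 0 with hv | hv
  · simp [hv]
  · rw [real_inner_smul_left, real_inner_smul_right, real_inner_self_eq_norm_sq]
    field_simp

variable {d N : ℕ} {F : Type*} [NormedAddCommGroup F] [NormedSpace ℝ F]
  (x : Fin N → Pt d) {V : Fin N → ℝ} (dw : ℝ → ℝ) (Λ : Finset (Fin N))

lemma dLap_eq (φ : Fin N → F) (i : Fin N) :
    dLap x V dw Λ φ i = (2 : ℝ) • ∑ j ∈ Λ.erase i,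
      (V j * (dw ‖x i - x j‖ / ‖x i - x j‖)) • (φ i - φ j) := by
  simp only [dLap, gradW, div_norm_mul_inner_inv_norm_smul]

variable (hV : ∀ j, 0 ≤ V j)
include hV

lemma norm_dLap_le (φ : Fin N → F) (i : Fin N) :
    ‖dLap x V dw Λ φ i‖ ≤
      2 * ∑ j ∈ Λ.erase i, V j * (|dw ‖x i - x j‖| / ‖x i - x j‖) * ‖φ i - φ j‖ := by
  rw [dLap_eq, norm_smul, Real.norm_two]
  gcongr
  refine (norm_sum_le _ _).trans_eq (sum_congr rfl fun j _ => ?_)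
  rw [norm_smul, Real.norm_eq_abs, abs_mul, abs_div, abs_norm, abs_of_nonneg (hV j)]

lemma sq_norm_dLap_le (φ : Fin N → F) (i : Fin N) :
    ‖dLap x V dw Λ φ i‖ ^ 2 ≤
      4 * (∑ j ∈ Λ.erase i, V j * (|dw ‖x i - x j‖| / ‖x i - x j‖)) *
        ∑ j ∈ Λ.erase i, V j * (‖φ i - φ j‖ ^ 2 / ‖x i - x j‖) * |dw ‖x i - x j‖| := by
  set a : Fin N → ℝ := fun j => V j * (|dw ‖x i - x j‖| / ‖x i - x j‖)
  have ha : ∀ j, 0 ≤ a j := fun j => mul_nonneg (hV j) (by positivity)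
  have hCS : (∑ j ∈ Λ.erase i, a j * ‖φ i - φ j‖) ^ 2 ≤
      (∑ j ∈ Λ.erase i, a j) * ∑ j ∈ Λ.erase i, a j * ‖φ i - φ j‖ ^ 2 :=
    sum_sq_le_sum_mul_sum_of_sq_le_mul _ (fun j _ => ha j)
      (fun j _ => mul_nonneg (ha j) (sq_nonneg _)) (fun j _ => le_of_eq (by ring))
  calc ‖dLap x V dw Λ φ i‖ ^ 2 ≤ (2 * ∑ j ∈ Λ.erase i, a j * ‖φ i - φ j‖) ^ 2 := by
        gcongr; exact norm_dLap_le x dw Λ hV φ i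
    _ = 4 * (∑ j ∈ Λ.erase i, a j * ‖φ i - φ j‖) ^ 2 := by ring
    _ ≤ 4 * ((∑ j ∈ Λ.erase i, a j) * ∑ j ∈ Λ.erase i, a j * ‖φ i - φ j‖ ^ 2) := by gcongr
    _ = _ := by
        rw [mul_assoc]; congr 2
        exact sum_congr rfl fun j _ => by ring

lemma l2normSq_dLap_le {M : ℝ}
    (hM : ∀ i, ∑ j ∈ univ.erase i, V j * (|dw ‖x i - x j‖| / ‖x i - x j‖) ≤ M)
    (φ : Fin N → F) :
    l2normSq V Λ (dLap x V dw Λ φ) ≤ 4 * M * h1semiSq x V dw Λ φ := by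
  rw [l2normSq, h1semiSq, mul_sum]
  refine sum_le_sum fun i _ => ?_
  have hsub : ∑ j ∈ Λ.erase i, V j * (|dw ‖x i - x j‖| / ‖x i - x j‖) ≤ M :=
    (sum_le_sum_of_subset_of_nonneg (erase_subset_erase i (subset_univ Λ))
      fun j _ _ => mul_nonneg (hV j) (by positivity)).trans (hM i)
  have hrow : 0 ≤ ∑ j ∈ Λ.erase i, V j * (‖φ i - φ j‖ ^ 2 / ‖x i - x j‖) * |dw ‖x i - x j‖| :=
    sum_nonneg fun j _ => mul_nonneg (mul_nonneg (hV j) (by positivity)) (abs_nonneg _)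
  calc V i * ‖dLap x V dw Λ φ i‖ ^ 2
      ≤ V i * (4 * M * ∑ j ∈ Λ.erase i,
          V j * (‖φ i - φ j‖ ^ 2 / ‖x i - x j‖) * |dw ‖x i - x j‖|) := by
        gcongr
        · exact hV i
        · exact (sq_norm_dLap_le x dw Λ hV φ i).trans (by gcongr)
    _ = _ := by ring

end ISPH

theorem statement8_general (d N : ℕ)
    (x : Fin N → Pt d)
    (V : Fin N → ℝ) (hV : ∀ i, 0 < V i)
    (w : ℝ → ℝ)
    (h : ℝ) (ν Δt δ : ℝ) (hΔt : 0 < Δt)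
    (hts : ∀ i, Δt * ∑ j ∈ Finset.univ.erase i,
      V j * (|dwh d h w ‖x i - x j‖| / ‖x i - x j‖) ≤ δ / (2 * ν)) :
    ∀ (Λ : Finset (Fin N)) (φ : Fin N → Pt d),
      l2normSq V Λ (dLap x V (dwh d h w) Λ φ) ≤
        (2 * δ / (Δt * ν)) * h1semiSq x V (dwh d h w) Λ φ := by
  intro Λ φ
  have hM : ∀ i, ∑ j ∈ univ.erase i, V j * (|dwh d h w ‖x i - x j‖| / ‖x i - x j‖) ≤
      δ / (2 * ν) / Δt := fun i => by
    rw [le_div_iff₀ hΔt, mul_comm]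
    exact hts i
  calc l2normSq V Λ (dLap x V (dwh d h w) Λ φ)
      ≤ 4 * (δ / (2 * ν) / Δt) * h1semiSq x V (dwh d h w) Λ φ :=
        l2normSq_dLap_le x _ Λ (fun i => (hV i).le) hM φ
    _ = (2 * δ / (Δt * ν)) * h1semiSq x V (dwh d h w) Λ φ := by ring

/-- under the time step condition, the discrete `L²` norm of the
discrete Laplacian is controlled by the discrete `H¹₀` seminorm. -/
theorem statement8 (d N : ℕ) (hd : d = 2 ∨ d = 3)
    (x : Fin N → Pt d) (hx : Function.Injective x)
    (V : Fin N → ℝ) (hV : ∀ i, 0 < V i)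
    (w : ℝ → ℝ) (r₀ : ℝ) (hw : IsRefWeight d w r₀)
    (h : ℝ) (hh : 0 < h) (ν Δt δ : ℝ) (hν : 0 < ν) (hΔt : 0 < Δt)
    (hδ : 0 < δ) (hδ1 : δ < 1)
    (hts : ∀ i, Δt * ∑ j ∈ Finset.univ.erase i,
      V j * (|dwh d h w ‖x i - x j‖| / ‖x i - x j‖) ≤ δ / (2 * ν)) :
    ∀ (Λ : Finset (Fin N)) (φ : Fin N → Pt d),
      l2normSq V Λ (dLap x V (dwh d h w) Λ φ) ≤
        (2 * δ / (Δt * ν)) * h1semiSq x V (dwh d h w) Λ φ :=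
  statement8_general d N x V hV w h ν Δt δ hΔt hts
end
end

section
/- Let d ∈ {2,3} and let w be the cubic B-spline reference weight function on ℝ^d: w(r) = C(1 − (3/2)r² + (3/4)r³) for 0 ≤ r < 1, w(r) = (C/4)(2 − r)³ for 1 ≤ r < 2, and w(r) = 0 for r ≥ 2, where C = 10/(7π) if d = 2 and C = 1/π if d = 3. Then (1/2)(∫_{ℝ^d} |ẇ(|y|)| / |y| dy)^{−1} equals 7/40 when d = 2 and equals 1/6 when d = 3. -/
open MeasureTheory Finset
open scoped BigOperators RealInnerProductSpace

noncomputable section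

open ISPH

/-! In polar coordinates `∫_{ℝⁿ} f(|y|)/|y| dy = n |B₁| ∫₀^∞ rⁿ⁻² f(r) dr`. On `(0, 1)`
and `(1, 2)` the function `|ẇ|` is an explicit polynomial, so these radial moments are
elementary: `∫₀^∞ |ẇ| = C` and `∫₀^∞ r |ẇ| = 3C/4`. With `|B₁| = π` resp. `4π/3` the
integral is `2πC = 20/7` for `d = 2` and `3πC = 3` for `d = 3`. -/

theorem MeasureTheory.integral_fun_norm_div_norm_addHaar {E : Type*} [NormedAddCommGroup E]
    [NormedSpace ℝ E] [FiniteDimensional ℝ E] [MeasurableSpace E] [BorelSpace E]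
    (μ : Measure E) [μ.IsAddHaarMeasure] (hE : 2 ≤ Module.finrank ℝ E) (f : ℝ → ℝ) :
    ∫ x, f ‖x‖ / ‖x‖ ∂μ = Module.finrank ℝ E * μ.real (Metric.ball 0 1) *
      ∫ y in Set.Ioi 0, y ^ (Module.finrank ℝ E - 2) * f y := by
  have : Nontrivial E := Module.nontrivial_of_finrank_pos (R := ℝ) (by omega)
  rw [integral_fun_norm_addHaar μ (fun r => f r / r), nsmul_eq_mul, smul_eq_mul, mul_assoc]
  congr 2
  refine setIntegral_congr_fun measurableSet_Ioi fun y (hy : 0 < y) => ?_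
  obtain ⟨k, hk⟩ := Nat.exists_eq_add_of_le' hE
  rw [hk, smul_eq_mul, show k + 2 - 1 = k + 1 by omega, Nat.add_sub_cancel, pow_succ]
  field_simp

namespace ISPH

def IsCubicBSpline (C : ℝ) (w : ℝ → ℝ) : Prop :=
  ∀ r : ℝ, 0 ≤ r → w r =
    if r < 1 then C * (1 - 3 / 2 * r ^ 2 + 3 / 4 * r ^ 3)
    else if r < 2 then C / 4 * (2 - r) ^ 3
    else 0

namespace IsCubicBSpline

variable {C : ℝ} {w : ℝ → ℝ} {r : ℝ}

theorem hasDerivAt_of_lt_one (hw : IsCubicBSpline C w) (h0 : 0 < r) (h1 : r < 1) :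
    HasDerivAt w (-(C * (3 * r - 9 / 4 * r ^ 2))) r := by
  have hpoly := (((hasDerivAt_pow 2 r).const_mul (3 / 2 : ℝ)).const_sub 1).add
    ((hasDerivAt_pow 3 r).const_mul (3 / 4 : ℝ)) |>.const_mul C
  refine (hpoly.congr_deriv (by push_cast; ring)).congr_of_eventuallyEq ?_
  filter_upwards [Ioo_mem_nhds h0 h1] with s hs
  rw [hw s hs.1.le, if_pos hs.2]
  rfl

theorem hasDerivAt_of_one_lt_of_lt_two (hw : IsCubicBSpline C w) (h1 : 1 < r) (h2 : r < 2) :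
    HasDerivAt w (-(3 * C / 4 * (2 - r) ^ 2)) r := by
  have hpoly := (((hasDerivAt_id' r).const_sub 2).pow 3).const_mul (C / 4)
  refine (hpoly.congr_deriv (by push_cast; ring)).congr_of_eventuallyEq ?_
  filter_upwards [Ioo_mem_nhds h1 h2] with s hs
  rw [hw s (by linarith [hs.1]), if_neg (by linarith [hs.1]), if_pos hs.2]
  rfl

theorem hasDerivAt_of_two_lt (hw : IsCubicBSpline C w) (h2 : 2 < r) : HasDerivAt w 0 r := by
  refine (hasDerivAt_const r 0).congr_of_eventuallyEq ?_
  filter_upwards [Ioi_mem_nhds h2] with s (hs : 2 < s)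
  rw [hw s (by linarith), if_neg (by linarith), if_neg (by linarith)]

theorem pow_mul_abs_deriv_ae_eq (hw : IsCubicBSpline C w) (hC : 0 ≤ C) (m : ℕ) :
    (fun y => y ^ m * |deriv w y|) =ᵐ[volume.restrict (Set.Ioi 0)]
      (Set.Ioc 0 1).indicator (fun y => C * (3 * y ^ (m + 1) - 9 / 4 * y ^ (m + 2))) +
      (Set.Ioc 1 2).indicator
        (fun y => 3 * C / 4 * (4 * y ^ m - 4 * y ^ (m + 1) + y ^ (m + 2))) := by
  filter_upwards [ae_restrict_mem measurableSet_Ioi,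
    ae_restrict_of_ae ((Set.toFinite {(1 : ℝ), 2}).countable.ae_notMem volume)]
    with y (hy0 : 0 < y) hy
  simp only [Set.mem_insert_iff, Set.mem_singleton_iff, not_or] at hy
  have hnot_Ioc_one_two : y ≤ 1 ∨ 2 < y → y ∉ Set.Ioc 1 2 := by
    rintro (h | h) ⟨h1, h2⟩ <;> linarith
  rw [Pi.add_apply]
  rcases Ne.lt_or_gt hy.1 with h1 | h1
  · rw [(hw.hasDerivAt_of_lt_one hy0 h1).deriv, abs_neg,
      abs_of_nonneg (mul_nonneg hC (by nlinarith)),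
      Set.indicator_of_mem (Set.mem_Ioc.2 ⟨hy0, h1.le⟩),
      Set.indicator_of_notMem (hnot_Ioc_one_two (.inl h1.le))]
    ring
  have hnot_Ioc_zero_one : y ∉ Set.Ioc 0 1 := fun h => h1.not_ge h.2
  rcases Ne.lt_or_gt hy.2 with h2 | h2
  · rw [(hw.hasDerivAt_of_one_lt_of_lt_two h1 h2).deriv, abs_neg, abs_of_nonneg (by positivity),
      Set.indicator_of_notMem hnot_Ioc_zero_one,
      Set.indicator_of_mem (Set.mem_Ioc.2 ⟨h1, h2.le⟩)]
    ring
  · rw [(hw.hasDerivAt_of_two_lt h2).deriv, Set.indicator_of_notMem hnot_Ioc_zero_one,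
      Set.indicator_of_notMem (hnot_Ioc_one_two (.inr h2))]
    simp

theorem integral_Ioi_pow_mul_abs_deriv (hw : IsCubicBSpline C w) (hC : 0 ≤ C) (m : ℕ) :
    ∫ y in Set.Ioi 0, y ^ m * |deriv w y| =
      C * (3 / (m + 2) - 9 / (4 * (m + 3))) + 3 * C / 4 *
        (4 * (2 ^ (m + 1) - 1) / (m + 1) - 4 * (2 ^ (m + 2) - 1) / (m + 2) +
          (2 ^ (m + 3) - 1) / (m + 3)) := by
  have hp : IntegrableOn (fun y : ℝ => C * (3 * y ^ (m + 1) - 9 / 4 * y ^ (m + 2)))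
      (Set.Ioc 0 1) := (by fun_prop : Continuous _).integrableOn_Ioc
  have hq : IntegrableOn (fun y : ℝ => 3 * C / 4 * (4 * y ^ m - 4 * y ^ (m + 1) + y ^ (m + 2)))
      (Set.Ioc 1 2) := (by fun_prop : Continuous _).integrableOn_Ioc
  have hpow (k : ℕ) (a b : ℝ) : IntervalIntegrable (fun y : ℝ => y ^ k) volume a b :=
    (continuous_pow k).intervalIntegrable a b
  rw [integral_congr_ae (hw.pow_mul_abs_deriv_ae_eq hC m),
    integral_add' (hp.integrable_indicator measurableSet_Ioc).integrableOn
      (hq.integrable_indicator measurableSet_Ioc).integrableOn,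
    setIntegral_indicator measurableSet_Ioc, setIntegral_indicator measurableSet_Ioc,
    Set.inter_eq_right.2 Set.Ioc_subset_Ioi_self,
    Set.inter_eq_right.2 (Set.Ioc_subset_Ioi_self.trans (Set.Ioi_subset_Ioi zero_le_one)),
    ← intervalIntegral.integral_of_le zero_le_one, ← intervalIntegral.integral_of_le one_le_two,
    intervalIntegral.integral_const_mul, intervalIntegral.integral_const_mul,
    intervalIntegral.integral_sub ((hpow _ _ _).const_mul _) ((hpow _ _ _).const_mul _),
    intervalIntegral.integral_add (((hpow _ _ _).const_mul _).sub ((hpow _ _ _).const_mul _))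
      (hpow _ _ _),
    intervalIntegral.integral_sub ((hpow _ _ _).const_mul _) ((hpow _ _ _).const_mul _)]
  simp only [intervalIntegral.integral_const_mul, integral_pow]
  push_cast
  field_simp
  ring

end IsCubicBSpline

end ISPH

theorem statement18_general (d : ℕ) (C : ℝ)
    (hC2 : d = 2 → C = 10 / (7 * Real.pi))
    (hC3 : d = 3 → C = 1 / Real.pi)
    (w : ℝ → ℝ)
    (hw : ∀ r : ℝ, 0 ≤ r → w r =
      if r < 1 then C * (1 - 3 / 2 * r ^ 2 + 3 / 4 * r ^ 3)
      else if r < 2 then C / 4 * (2 - r) ^ 3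
      else 0) :
    (d = 2 → (1 / 2) * (∫ y : Pt 2, |deriv w ‖y‖| / ‖y‖)⁻¹ = 7 / 40) ∧
    (d = 3 → (1 / 2) * (∫ y : Pt 3, |deriv w ‖y‖| / ‖y‖)⁻¹ = 1 / 6) := by
  replace hw : IsCubicBSpline C w := hw
  refine ⟨fun h2 => ?_, fun h3 => ?_⟩
  · obtain rfl := hC2 h2
    have hball : volume.real (Metric.ball (0 : Pt 2) 1) = Real.pi := by
      simp [measureReal_def, Real.pi_pos.le]
    rw [integral_fun_norm_div_norm_addHaar volume (by simp) (fun r => |deriv w r|),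
      finrank_euclideanSpace_fin, hball, hw.integral_Ioi_pow_mul_abs_deriv (by positivity)]
    field_simp
    norm_num
  · obtain rfl := hC3 h3
    have hball : volume.real (Metric.ball (0 : Pt 3) 1) = Real.pi * 4 / 3 := by
      simp [measureReal_def, ENNReal.toReal_ofReal (by positivity : 0 ≤ Real.pi * 4 / 3)]
    rw [integral_fun_norm_div_norm_addHaar volume (by simp) (fun r => |deriv w r|),
      finrank_euclideanSpace_fin, hball, hw.integral_Ioi_pow_mul_abs_deriv (by positivity)]
    field_simp
    norm_num

/-- the continuum time-step coefficient of the cubic B-spline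
reference weight function is `7/40` in dimension 2 and `1/6` in dimension 3. -/
theorem statement18 (d : ℕ) (hd : d = 2 ∨ d = 3) (C : ℝ)
    (hC2 : d = 2 → C = 10 / (7 * Real.pi))
    (hC3 : d = 3 → C = 1 / Real.pi)
    (w : ℝ → ℝ)
    (hw : ∀ r : ℝ, 0 ≤ r → w r =
      if r < 1 then C * (1 - 3 / 2 * r ^ 2 + 3 / 4 * r ^ 3)
      else if r < 2 then C / 4 * (2 - r) ^ 3
      else 0) :
    (d = 2 → (1 / 2) * (∫ y : Pt 2, |deriv w ‖y‖| / ‖y‖)⁻¹ = 7 / 40) ∧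
    (d = 3 → (1 / 2) * (∫ y : Pt 3, |deriv w ‖y‖| / ‖y‖)⁻¹ = 1 / 6) :=
  statement18_general d C hC2 hC3 w hw
end
end

section
/- Let d ∈ {2,3} and let w be the quintic B-spline reference weight function on ℝ^d: w(r) = C((3−r)⁵ − 6(2−r)⁵ + 15(1−r)⁵) for 0 ≤ r < 1, w(r) = C((3−r)⁵ − 6(2−r)⁵) for 1 ≤ r < 2, w(r) = C(3−r)⁵ for 2 ≤ r < 3, and w(r) = 0 for r ≥ 3, where C = 7/(478π) if d = 2 and C = 1/(120π) if d = 3. Then (1/2)(∫_{ℝ^d} |ẇ(|y|)| / |y| dy)^{−1} equals 239/924 when d = 2 and equals 1/4 when d = 3. -/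
open MeasureTheory Finset
open scoped BigOperators RealInnerProductSpace

noncomputable section

open ISPH

/-!
In polar coordinates the integral is `d · |B₁| · ∫₀^∞ r^(d-2) |w'(r)| dr`. Written with
truncated powers, `w = C ((3 - r)₊⁵ - 6 (2 - r)₊⁵ + 15 (1 - r)₊⁵)` on `r ≥ 0`, so
`w' = -5 C ((3 - r)₊⁴ - 6 (2 - r)₊⁴ + 15 (1 - r)₊⁴)`, which is `≤ 0` for `r > 0`. The radial
integral is therefore a combination of the Beta integrals `∫₀^a r^k (a - r)⁴ dr`, and equals
`66 C` for `d = 2` and `60 C` for `d = 3`.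
-/

open Set Filter Topology

lemma hasDerivAt_posPart_sub_pow (a r : ℝ) {n : ℕ} (hn : n ≠ 0) :
    HasDerivAt (fun x => (a - x)⁺ ^ (n + 1)) (-((n + 1) * (a - r)⁺ ^ n)) r := by
  have hpoly (x : ℝ) : HasDerivAt (fun y => (a - y) ^ (n + 1)) (-((n + 1) * (a - x) ^ n)) x := by
    simpa using ((hasDerivAt_id x).const_sub a).fun_pow (n + 1)
  rcases lt_trichotomy r a with hlt | rfl | hgt
  · rw [posPart_of_nonneg (sub_nonneg.2 hlt.le)]
    refine (hpoly r).congr_of_eventuallyEq ?_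
    filter_upwards [Iio_mem_nhds hlt] with x hx
    rw [posPart_of_nonneg (sub_nonneg.2 hx.le)]
  · have hleft : HasDerivWithinAt (fun x => (r - x)⁺ ^ (n + 1)) 0 (Iic r) r := by
      simpa [hn] using (hpoly r).hasDerivWithinAt.congr
        (fun x hx => by rw [posPart_of_nonneg (sub_nonneg.2 hx)]) (by simp)
    have hright : HasDerivWithinAt (fun x => (r - x)⁺ ^ (n + 1)) 0 (Ici r) r :=
      (hasDerivWithinAt_const r _ (0 : ℝ)).congr
        (fun x hx => by simp [posPart_of_nonpos (sub_nonpos.2 (mem_Ici.1 hx))]) (by simp)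
    have := hleft.union hright
    rw [Iic_union_Ici, hasDerivWithinAt_univ] at this
    simpa [hn] using this
  · rw [posPart_of_nonpos (sub_nonpos.2 hgt.le), zero_pow hn, mul_zero, neg_zero]
    refine (hasDerivAt_const r (0 : ℝ)).congr_of_eventuallyEq ?_
    filter_upwards [Ioi_mem_nhds hgt] with x hx
    simp [posPart_of_nonpos (sub_nonpos.2 (mem_Ioi.1 hx).le)]

lemma integrableOn_Ioi_pow_mul_posPart_sub_pow (k : ℕ) {n : ℕ} (hn : n ≠ 0) (a : ℝ) :
    IntegrableOn (fun r => r ^ k * (a - r)⁺ ^ n) (Ioi 0) := by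
  refine IntegrableOn.of_forall_sdiff_eq_zero (s := Icc 0 a) ?_ measurableSet_Ioi ?_
  · exact (Continuous.continuousOn (by fun_prop)).integrableOn_Icc
  · rintro r ⟨hr0, hra⟩
    have : a ≤ r := not_lt.1 fun h => hra ⟨hr0.le, h.le⟩
    simp [posPart_of_nonpos (sub_nonpos.2 this), hn]

lemma integral_Ioi_pow_mul_posPart_sub_pow (k : ℕ) {n : ℕ} (hn : n ≠ 0) {a : ℝ}
    (ha : 0 ≤ a) :
    ∫ r in Ioi 0, r ^ k * (a - r)⁺ ^ n = ∫ r in 0..a, r ^ k * (a - r) ^ n := by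
  rw [intervalIntegral.integral_of_le ha,
    setIntegral_eq_of_subset_of_forall_sdiff_eq_zero measurableSet_Ioi Ioc_subset_Ioi_self]
  · refine setIntegral_congr_fun measurableSet_Ioc fun r hr => ?_
    rw [posPart_of_nonneg (sub_nonneg.2 hr.2)]
  · rintro r ⟨hr0, hra⟩
    have : a ≤ r := not_lt.1 fun h => hra ⟨hr0, h.le⟩
    simp [posPart_of_nonpos (sub_nonpos.2 this), hn]

lemma integral_sub_pow (n : ℕ) (a : ℝ) :
    ∫ r in 0..a, (a - r) ^ n = a ^ (n + 1) / (n + 1) := by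
  simp [intervalIntegral.integral_comp_sub_left fun x => x ^ n]

lemma integral_mul_sub_pow (n : ℕ) (a : ℝ) :
    ∫ r in 0..a, r * (a - r) ^ n = a ^ (n + 2) / ((n + 1) * (n + 2)) := by
  have h := intervalIntegral.integral_comp_sub_left (fun u => (a - u) * u ^ n)
    (a := 0) (b := a) a
  simp only [sub_sub_cancel, sub_self, sub_zero] at h
  rw [h]
  simp only [sub_mul, ← pow_succ']
  rw [intervalIntegral.integral_sub (by apply Continuous.intervalIntegrable; fun_prop)
    (by apply Continuous.intervalIntegrable; fun_prop)]
  simp [integral_pow]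
  field_simp
  ring

def bsplineTrunc (n : ℕ) (r : ℝ) : ℝ :=
  (3 - r)⁺ ^ n - 6 * (2 - r)⁺ ^ n + 15 * (1 - r)⁺ ^ n

lemma hasDerivAt_bsplineTrunc {n : ℕ} (hn : n ≠ 0) (r : ℝ) :
    HasDerivAt (bsplineTrunc (n + 1)) (-((n + 1) * bsplineTrunc n r)) r := by
  refine (((hasDerivAt_posPart_sub_pow 3 r hn).sub
    ((hasDerivAt_posPart_sub_pow 2 r hn).const_mul 6)).add
    ((hasDerivAt_posPart_sub_pow 1 r hn).const_mul 15)).congr_deriv ?_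
  simp only [bsplineTrunc]
  ring

lemma bsplineTrunc_eq_ite {n : ℕ} (hn : n ≠ 0) (r : ℝ) :
    bsplineTrunc n r =
      if r < 1 then (3 - r) ^ n - 6 * (2 - r) ^ n + 15 * (1 - r) ^ n
      else if r < 2 then (3 - r) ^ n - 6 * (2 - r) ^ n
      else if r < 3 then (3 - r) ^ n
      else 0 := by
  have pos {a : ℝ} (h : r < a) : (a - r)⁺ = a - r := posPart_of_nonneg (by linarith)
  have zero {a : ℝ} (h : a ≤ r) : (a - r)⁺ ^ n = 0 := by
    rw [posPart_of_nonpos (by linarith), zero_pow hn]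
  unfold bsplineTrunc
  split_ifs with h1 h2 h3
  · rw [pos h1, pos (by linarith), pos (by linarith)]
  · rw [pos h2, pos (by linarith), zero (not_lt.1 h1), mul_zero, add_zero]
  · rw [pos h3, zero (not_lt.1 h2), zero (by linarith), mul_zero, mul_zero, sub_zero, add_zero]
  · rw [zero (not_lt.1 h3), zero (by linarith), zero (by linarith)]
    ring

lemma bsplineTrunc_four_nonneg {r : ℝ} (hr : 0 ≤ r) : 0 ≤ bsplineTrunc 4 r := by
  rw [bsplineTrunc_eq_ite four_ne_zero]
  split_ifs with h1 h2 h3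
  · have hr2 : 0 ≤ 1 - r ^ 2 := by nlinarith
    have hfactor : (3 - r) ^ 4 - 6 * (2 - r) ^ 4 + 15 * (1 - r) ^ 4
        = 2 * r * (12 * (1 - r ^ 2) + 5 * r ^ 3) := by ring
    rw [hfactor]
    positivity
  · have h : (2 * (2 - r)) ^ 4 ≤ (3 - r) ^ 4 :=
      pow_le_pow_left₀ (by linarith) (by linarith [not_lt.1 h1]) 4
    rw [mul_pow] at h
    linarith [pow_nonneg (sub_nonneg.2 h2.le) 4]
  · positivity
  · rfl

lemma integral_Ioi_pow_mul_bsplineTrunc (k : ℕ) {n : ℕ} (hn : n ≠ 0) :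
    ∫ r in Ioi 0, r ^ k * bsplineTrunc n r =
      (∫ r in 0..3, r ^ k * (3 - r) ^ n) - 6 * (∫ r in 0..2, r ^ k * (2 - r) ^ n) +
        15 * ∫ r in 0..1, r ^ k * (1 - r) ^ n := by
  have hint (a : ℝ) := integrableOn_Ioi_pow_mul_posPart_sub_pow k hn a
  simp only [bsplineTrunc, mul_add, mul_sub, mul_left_comm _ (6 : ℝ), mul_left_comm _ (15 : ℝ)]
  rw [integral_add ?_ ((hint 1).const_mul 15),
    integral_sub (hint 3) ((hint 2).const_mul 6), integral_const_mul, integral_const_mul,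
    integral_Ioi_pow_mul_posPart_sub_pow k hn zero_le_three,
    integral_Ioi_pow_mul_posPart_sub_pow k hn zero_le_two,
    integral_Ioi_pow_mul_posPart_sub_pow k hn zero_le_one]
  exact (hint 3).sub ((hint 2).const_mul 6)

lemma integral_fun_norm_div_norm {d : ℕ} (hd : 2 ≤ d) (g : ℝ → ℝ) :
    ∫ y : Pt d, g ‖y‖ / ‖y‖ =
      d * volume.real (Metric.ball (0 : Pt d) 1) * ∫ r in Ioi 0, r ^ (d - 2) * g r := by
  have : Nonempty (Fin d) := ⟨⟨0, by omega⟩⟩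
  rw [integral_fun_norm_addHaar volume (fun r => g r / r), nsmul_eq_mul, smul_eq_mul, mul_assoc,
    finrank_euclideanSpace_fin]
  congr 2
  refine setIntegral_congr_fun measurableSet_Ioi fun r (hr : 0 < r) => ?_
  rw [smul_eq_mul, show d - 1 = d - 2 + 1 by omega, pow_succ]
  field_simp

section QuinticWeight

variable {C : ℝ} {w : ℝ → ℝ}
  (hw : ∀ r : ℝ, 0 ≤ r → w r =
    if r < 1 then C * ((3 - r) ^ 5 - 6 * (2 - r) ^ 5 + 15 * (1 - r) ^ 5)
    else if r < 2 then C * ((3 - r) ^ 5 - 6 * (2 - r) ^ 5)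
    else if r < 3 then C * (3 - r) ^ 5
    else 0)
include hw

lemma eq_mul_bsplineTrunc {r : ℝ} (hr : 0 ≤ r) : w r = C * bsplineTrunc 5 r := by
  rw [hw r hr, bsplineTrunc_eq_ite (by norm_num)]
  split_ifs <;> ring

lemma deriv_eq_mul_bsplineTrunc {r : ℝ} (hr : 0 < r) :
    deriv w r = -(5 * C * bsplineTrunc 4 r) := by
  have hloc : w =ᶠ[𝓝 r] fun x => C * bsplineTrunc 5 x := by
    filter_upwards [Ioi_mem_nhds hr] with x hx
    exact eq_mul_bsplineTrunc hw (mem_Ioi.1 hx).le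
  rw [hloc.deriv_eq, ((hasDerivAt_bsplineTrunc four_ne_zero r).const_mul C).deriv]
  ring

lemma integral_Ioi_pow_mul_abs_deriv (hC : 0 ≤ C) (k : ℕ) :
    ∫ r in Ioi 0, r ^ k * |deriv w r| = 5 * C * ∫ r in Ioi 0, r ^ k * bsplineTrunc 4 r := by
  rw [← integral_const_mul]
  refine setIntegral_congr_fun measurableSet_Ioi fun r hr => ?_
  rw [deriv_eq_mul_bsplineTrunc hw hr, abs_neg,
    abs_of_nonneg (by have := bsplineTrunc_four_nonneg (mem_Ioi.1 hr).le; positivity)]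
  ring

lemma integral_abs_deriv_norm_div_norm_two (hC : 0 ≤ C) :
    ∫ y : Pt 2, |deriv w ‖y‖| / ‖y‖ = 2 * Real.pi * (66 * C) := by
  rw [integral_fun_norm_div_norm le_rfl (fun r => |deriv w r|),
    integral_Ioi_pow_mul_abs_deriv hw hC, integral_Ioi_pow_mul_bsplineTrunc _ four_ne_zero]
  simp [integral_sub_pow, Measure.real, ENNReal.toReal_ofReal Real.pi_nonneg]
  ring

lemma integral_abs_deriv_norm_div_norm_three (hC : 0 ≤ C) :
    ∫ y : Pt 3, |deriv w ‖y‖| / ‖y‖ = 4 * Real.pi * (60 * C) := by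
  rw [integral_fun_norm_div_norm (by norm_num) (fun r => |deriv w r|),
    integral_Ioi_pow_mul_abs_deriv hw hC, integral_Ioi_pow_mul_bsplineTrunc _ four_ne_zero]
  simp [integral_mul_sub_pow, Measure.real]
  rw [ENNReal.toReal_ofReal (by positivity)]
  ring

end QuinticWeight

theorem statement19_general (d : ℕ) (C : ℝ)
    (hC2 : d = 2 → C = 7 / (478 * Real.pi))
    (hC3 : d = 3 → C = 1 / (120 * Real.pi))
    (w : ℝ → ℝ)
    (hw : ∀ r : ℝ, 0 ≤ r → w r =
      if r < 1 then C * ((3 - r) ^ 5 - 6 * (2 - r) ^ 5 + 15 * (1 - r) ^ 5)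
      else if r < 2 then C * ((3 - r) ^ 5 - 6 * (2 - r) ^ 5)
      else if r < 3 then C * (3 - r) ^ 5
      else 0) :
    (d = 2 → (1 / 2) * (∫ y : Pt 2, |deriv w ‖y‖| / ‖y‖)⁻¹ = 239 / 924) ∧
    (d = 3 → (1 / 2) * (∫ y : Pt 3, |deriv w ‖y‖| / ‖y‖)⁻¹ = 1 / 4) := by
  refine ⟨fun h2 => ?_, fun h3 => ?_⟩
  · have hC := hC2 h2
    rw [integral_abs_deriv_norm_div_norm_two hw (by rw [hC]; positivity), hC]
    field_simp
    norm_num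
  · have hC := hC3 h3
    rw [integral_abs_deriv_norm_div_norm_three hw (by rw [hC]; positivity), hC]
    field_simp
    norm_num

/-- the continuum time-step coefficient of the quintic B-spline
reference weight function is `239/924` in dimension 2 and `1/4` in dimension 3. -/
theorem statement19 (d : ℕ) (hd : d = 2 ∨ d = 3) (C : ℝ)
    (hC2 : d = 2 → C = 7 / (478 * Real.pi))
    (hC3 : d = 3 → C = 1 / (120 * Real.pi))
    (w : ℝ → ℝ)
    (hw : ∀ r : ℝ, 0 ≤ r → w r =
      if r < 1 then C * ((3 - r) ^ 5 - 6 * (2 - r) ^ 5 + 15 * (1 - r) ^ 5)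
      else if r < 2 then C * ((3 - r) ^ 5 - 6 * (2 - r) ^ 5)
      else if r < 3 then C * (3 - r) ^ 5
      else 0) :
    (d = 2 → (1 / 2) * (∫ y : Pt 2, |deriv w ‖y‖| / ‖y‖)⁻¹ = 239 / 924) ∧
    (d = 3 → (1 / 2) * (∫ y : Pt 3, |deriv w ‖y‖| / ‖y‖)⁻¹ = 1 / 4) :=
  statement19_general d C hC2 hC3 w hw
end
end
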